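/- (Level constraint on singular vectors) If v ∈ M is a singular vector at level m ≥ 1, then either m = 1 and (h = f or h = −f), or m = 2n for some positive integer n and h = −n. -/

import Mathlib

/-!
Verma module `M(h,f)` over the ℤ₂×ℤ₂ graded superalgebra of Rittenberg–Wyler,
realized on the space of finitely supported functions `ℕ × Fin 2 × Fin 2 →₀ ℂ`,
with basis vectors `e k μ ν`.
-/

noncomputable section

/-- Index set for the basis of the Verma module. -/
abbrev Idx : Type := ℕ × Fin 2 × Fin 2

/-- The underlying space of the Verma module `M(h,f)`. -/
abbrev Mmod : Type := Idx →₀ ℂ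

/-- The standard basis vector `e(k,μ,ν)`. -/
def e (k : ℕ) (μ ν : Fin 2) : Mmod := Finsupp.single (k, μ, ν) 1

/-- Build a linear operator on `Mmod` from its values on basis vectors. -/
def mkOp (φ : Idx → Mmod) : Mmod →ₗ[ℂ] Mmod := Finsupp.lift Mmod ℂ Idx φ

/-- The lowering operator `A₋`.
`A₋ e(k,μ,ν) = 4k(h+k+μ+ν−1)·e(k−1,μ,ν) + 4(h+f)·δ_{μ,1}δ_{ν,1}·e(k,0,0)`
(with the convention `e(−1,μ,ν) = 0`, automatic since the coefficient vanishes at `k = 0`). -/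
def Am (h f : ℂ) : Mmod →ₗ[ℂ] Mmod :=
  mkOp fun p =>
    (4 * (p.1 : ℂ) * (h + (p.1 : ℂ) + ((p.2.1 : ℕ) : ℂ) + ((p.2.2 : ℕ) : ℂ) - 1))
        • e (p.1 - 1) p.2.1 p.2.2
    + (if p.2.1 = 1 ∧ p.2.2 = 1 then (4 * (h + f)) • e p.1 0 0 else 0)

/-- The lowering operator `c₊`.
`c₊ e(k,μ,ν) = 2(h+2k+2ν−f)·δ_{μ,1}·e(k,0,ν) + (−1)^μ·2k·δ_{ν,0}·e(k−1,μ,1)`. -/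
def cp (h f : ℂ) : Mmod →ₗ[ℂ] Mmod :=
  mkOp fun p =>
    (if p.2.1 = 1 then
        (2 * (h + 2 * (p.1 : ℂ) + 2 * ((p.2.2 : ℕ) : ℂ) - f)) • e p.1 0 p.2.2 else 0)
    + (if p.2.2 = 0 then
        ((-1 : ℂ) ^ (p.2.1 : ℕ) * (2 * (p.1 : ℂ))) • e (p.1 - 1) p.2.1 1 else 0)

/-- The lowering operator `c₋`.
`c₋ e(k,μ,ν) = (−1)^μ·2(h+f)·δ_{ν,1}·e(k,μ,0) + 2k·δ_{μ,0}·e(k−1,1,ν)`. -/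
def cm (h f : ℂ) : Mmod →ₗ[ℂ] Mmod :=
  mkOp fun p =>
    (if p.2.2 = 1 then
        ((-1 : ℂ) ^ (p.2.1 : ℕ) * (2 * (h + f))) • e p.1 p.2.1 0 else 0)
    + (if p.2.1 = 0 then (2 * (p.1 : ℂ)) • e (p.1 - 1) 1 p.2.2 else 0)

/-- The raising operator `A₊`: `A₊ e(k,μ,ν) = e(k+1,μ,ν)`. -/
def Ap : Mmod →ₗ[ℂ] Mmod := mkOp fun p => e (p.1 + 1) p.2.1 p.2.2

/-- The raising operator `d₊`: `d₊ e(k,μ,ν) = δ_{μ,0}·e(k,1,ν)`. -/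
def dp : Mmod →ₗ[ℂ] Mmod := mkOp fun p => if p.2.1 = 0 then e p.1 1 p.2.2 else 0

/-- The raising operator `d₋`:
`d₋ e(k,μ,ν) = (−1)^μ·δ_{ν,0}·e(k,μ,1) + 2·δ_{μ,1}·e(k+1,0,ν)`. -/
def dm : Mmod →ₗ[ℂ] Mmod :=
  mkOp fun p =>
    (if p.2.2 = 0 then ((-1 : ℂ) ^ (p.2.1 : ℕ)) • e p.1 p.2.1 1 else 0)
    + (if p.2.1 = 1 then (2 : ℂ) • e (p.1 + 1) 0 p.2.2 else 0)

/-- The Cartan operator `N`: `N e(k,μ,ν) = (h+2k+μ+ν)·e(k,μ,ν)`. -/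
def Nop (h : ℂ) : Mmod →ₗ[ℂ] Mmod :=
  mkOp fun p =>
    (h + 2 * (p.1 : ℂ) + ((p.2.1 : ℕ) : ℂ) + ((p.2.2 : ℕ) : ℂ)) • e p.1 p.2.1 p.2.2

/-- The Cartan operator `F̃`: `F̃ e(k,μ,ν) = (f+μ−ν)·e(k,μ,ν)`. -/
def Fop (f : ℂ) : Mmod →ₗ[ℂ] Mmod :=
  mkOp fun p =>
    (f + ((p.2.1 : ℕ) : ℂ) - ((p.2.2 : ℕ) : ℂ)) • e p.1 p.2.1 p.2.2

/-- The set of basis vectors of level `m` (the level of `e(k,μ,ν)` is `2k+μ+ν`). -/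
def levelVecs (m : ℕ) : Set Mmod :=
  {v | ∃ (k : ℕ) (μ ν : Fin 2), 2 * k + (μ : ℕ) + (ν : ℕ) = m ∧ v = e k μ ν}

/-- `v` is a singular vector at level `m ≥ 1`: it is nonzero, lies in the span of the
level-`m` basis vectors, and is annihilated by `A₋`, `c₊` and `c₋`. -/
def IsSingular (h f : ℂ) (m : ℕ) (v : Mmod) : Prop :=
  1 ≤ m ∧ v ≠ 0 ∧ v ∈ Submodule.span ℂ (levelVecs m) ∧
    Am h f v = 0 ∧ cp h f v = 0 ∧ cm h f v = 0

/-!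
Every level is two-dimensional: level `2n+1` is spanned by `e(n,1,0), e(n,0,1)` and level
`2n+2` by `e(n+1,0,0), e(n,1,1)`. For `v = a e(n,1,0) + b e(n,0,1)`
the vectors `c₊ v` and `c₋ v` have coefficients `-2na` and `2nb` on `e(n-1,1,1)`, so for `n ≥ 1`
the vector vanishes, while for `n = 0` what is left is `a(h-f) = b(h+f) = 0`. For
`v = a e(n+1,0,0) + b e(n,1,1)` both `c₊ v` and `c₋ v` are multiples of one basis vector, and the
difference of the two coefficients is `4b(h+n+1)`; since `b = 0` would force `a = 0`, `h = -(n+1)`.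
-/

lemma mkOp_e (φ : Idx → Mmod) (k : ℕ) (μ ν : Fin 2) : mkOp φ (e k μ ν) = φ (k, μ, ν) := by
  simp [mkOp, e]

lemma e_ne_zero (k : ℕ) (μ ν : Fin 2) : e k μ ν ≠ 0 :=
  Finsupp.single_ne_zero.mpr one_ne_zero

lemma smul_e_eq_zero_iff {c : ℂ} {k : ℕ} {μ ν : Fin 2} : c • e k μ ν = 0 ↔ c = 0 := by
  simp [e_ne_zero]

lemma smul_e_add_smul_e_eq_zero_iff {a b : ℂ} {k k' : ℕ} {μ ν μ' ν' : Fin 2}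
    (hne : (k, μ, ν) ≠ (k', μ', ν')) :
    a • e k μ ν + b • e k' μ' ν' = 0 ↔ a = 0 ∧ b = 0 := by
  refine ⟨fun H => ⟨?_, ?_⟩, fun ⟨ha, hb⟩ => by simp [ha, hb]⟩
  · simpa [e, Finsupp.single_apply, hne.symm] using DFunLike.congr_fun H (k, μ, ν)
  · simpa [e, Finsupp.single_apply, hne] using DFunLike.congr_fun H (k', μ', ν')

lemma levelVecs_two_mul_add_one (n : ℕ) : levelVecs (2 * n + 1) = {e n 1 0, e n 0 1} := by
  ext w
  simp only [levelVecs, Set.mem_ofPred_eq, Set.mem_insert_iff, Set.mem_singleton_iff]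
  constructor
  · rintro ⟨k, μ, ν, hlev, rfl⟩
    fin_cases μ <;> fin_cases ν <;> simp at hlev ⊢ <;> first | omega | (subst hlev; simp)
  · rintro (rfl | rfl)
    exacts [⟨n, 1, 0, rfl, rfl⟩, ⟨n, 0, 1, rfl, rfl⟩]

lemma levelVecs_two_mul_add_two (n : ℕ) :
    levelVecs (2 * (n + 1)) = {e (n + 1) 0 0, e n 1 1} := by
  ext w
  simp only [levelVecs, Set.mem_ofPred_eq, Set.mem_insert_iff, Set.mem_singleton_iff]
  constructor
  · rintro ⟨k, μ, ν, hlev, rfl⟩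
    fin_cases μ <;> fin_cases ν <;> simp at hlev ⊢ <;>
      first | omega | (subst hlev; simp) | (obtain rfl : k = n := by omega); simp
  · rintro (rfl | rfl)
    exacts [⟨n + 1, 0, 0, rfl, rfl⟩, ⟨n, 1, 1, by simp; ring, rfl⟩]

section
variable (h f : ℂ) (n : ℕ)

lemma cp_e_one_zero :
    cp h f (e n 1 0) = (2 * (h + 2 * n - f)) • e n 0 0 + (-(2 * n : ℂ)) • e (n - 1) 1 1 := by
  simp [cp, mkOp_e]

lemma cp_e_zero_one : cp h f (e n 0 1) = 0 := by
  simp [cp, mkOp_e]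

lemma cm_e_one_zero : cm h f (e n 1 0) = 0 := by
  simp [cm, mkOp_e]

lemma cm_e_zero_one :
    cm h f (e n 0 1) = (2 * (h + f)) • e n 0 0 + (2 * n : ℂ) • e (n - 1) 1 1 := by
  simp [cm, mkOp_e]

lemma cp_e_succ_zero_zero : cp h f (e (n + 1) 0 0) = (2 * (n + 1) : ℂ) • e n 0 1 := by
  simp [cp, mkOp_e]

lemma cp_e_one_one : cp h f (e n 1 1) = (2 * (h + 2 * n + 2 - f)) • e n 0 1 := by
  simp [cp, mkOp_e]

lemma cm_e_succ_zero_zero : cm h f (e (n + 1) 0 0) = (2 * (n + 1) : ℂ) • e n 1 0 := by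
  simp [cm, mkOp_e]

lemma cm_e_one_one : cm h f (e n 1 1) = (-(2 * (h + f))) • e n 1 0 := by
  simp [cm, mkOp_e]

end

section
variable {h f : ℂ} {v : Mmod}

lemma eq_zero_of_odd_level {n : ℕ} (hn : n ≠ 0)
    (hv : v ∈ Submodule.span ℂ (levelVecs (2 * n + 1)))
    (hcp : cp h f v = 0) (hcm : cm h f v = 0) : v = 0 := by
  rw [levelVecs_two_mul_add_one, Submodule.mem_span_pair] at hv
  obtain ⟨a, b, rfl⟩ := hv
  have hne : (n, (0 : Fin 2), (0 : Fin 2)) ≠ (n - 1, 1, 1) := by simp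
  have hn' : (n : ℂ) ≠ 0 := Nat.cast_ne_zero.mpr hn
  simp only [map_add, map_smul, cp_e_one_zero, cp_e_zero_one, cm_e_one_zero, cm_e_zero_one,
    smul_zero, add_zero, zero_add, smul_add, smul_smul] at hcp hcm
  obtain ⟨-, ha⟩ := (smul_e_add_smul_e_eq_zero_iff hne).mp hcp
  obtain ⟨-, hb⟩ := (smul_e_add_smul_e_eq_zero_iff hne).mp hcm
  obtain rfl : a = 0 := by simpa [hn'] using ha
  obtain rfl : b = 0 := by simpa [hn'] using hb
  simp

lemma eq_or_eq_neg_of_level_one (hv : v ∈ Submodule.span ℂ (levelVecs 1)) (hv0 : v ≠ 0)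
    (hcp : cp h f v = 0) (hcm : cm h f v = 0) : h = f ∨ h = -f := by
  rw [show levelVecs 1 = {e 0 1 0, e 0 0 1} from levelVecs_two_mul_add_one 0,
    Submodule.mem_span_pair] at hv
  obtain ⟨a, b, rfl⟩ := hv
  simp only [map_add, map_smul, cp_e_one_zero, cp_e_zero_one, cm_e_one_zero, cm_e_zero_one,
    CharP.cast_eq_zero, mul_zero, neg_zero, zero_smul, add_zero, zero_add, smul_zero, smul_smul,
    smul_e_eq_zero_iff, mul_eq_zero, OfNat.ofNat_ne_zero, false_or, sub_eq_zero] at hcp hcm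
  rcases hcp with rfl | hf
  · rcases hcm with rfl | hf
    · simp at hv0
    · exact Or.inr (eq_neg_of_add_eq_zero_left hf)
  · exact Or.inl hf

lemma eq_neg_of_even_level {n : ℕ} (hv : v ∈ Submodule.span ℂ (levelVecs (2 * (n + 1))))
    (hv0 : v ≠ 0) (hcp : cp h f v = 0) (hcm : cm h f v = 0) : h = -(n + 1 : ℂ) := by
  rw [levelVecs_two_mul_add_two, Submodule.mem_span_pair] at hv
  obtain ⟨a, b, rfl⟩ := hv
  simp only [map_add, map_smul, cp_e_succ_zero_zero, cp_e_one_one, cm_e_succ_zero_zero,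
    cm_e_one_one, smul_smul, ← add_smul, smul_e_eq_zero_iff] at hcp hcm
  have hb : b * (h + (n + 1)) = 0 := by linear_combination (hcp - hcm) / 4
  rcases mul_eq_zero.mp hb with rfl | hh
  · have ha : a * (2 * (n + 1)) = 0 := by simpa using hcp
    obtain rfl : a = 0 := by simpa [Nat.cast_add_one_ne_zero] using ha
    simp at hv0
  · exact eq_neg_of_add_eq_zero_left hh

end

/-- Level constraint on singular vectors: if `v` is a singular vector at level
`m ≥ 1`, then either `m = 1` and (`h = f` or `h = −f`), or `m = 2n` for some
positive integer `n` and `h = −n`. -/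
theorem singular_vector_level_constraint (h f : ℂ) (m : ℕ) (v : Mmod)
    (hsing : IsSingular h f m v) :
    (m = 1 ∧ (h = f ∨ h = -f)) ∨
    (∃ n : ℕ, 1 ≤ n ∧ m = 2 * n ∧ h = -(n : ℂ)) := by
  obtain ⟨hm, hv0, hv, -, hcp, hcm⟩ := hsing
  obtain ⟨n, rfl | rfl⟩ := Nat.even_or_odd' m
  · obtain ⟨n, rfl⟩ : ∃ k, n = k + 1 := Nat.exists_eq_add_one.mpr (by omega)
    exact Or.inr ⟨n + 1, by omega, rfl, by exact_mod_cast eq_neg_of_even_level hv hv0 hcp hcm⟩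
  · rcases Nat.eq_zero_or_pos n with rfl | hn
    · exact Or.inl ⟨rfl, eq_or_eq_neg_of_level_one hv hv0 hcp hcm⟩
    · exact absurd (eq_zero_of_odd_level hn.ne' hv hcp hcm) hv0
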